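/- arXiv:1105.4237 — 3 statements merged into one kernel-verified Lean document; each statement's English description precedes it below -/
import Mathlib

section
/- Let E₂ ⊇ E₃ be the subspaces of F_q^{n₁+n₂+n₃} spanned by the last n₂+n₃ and the last n₃ standard basis vectors respectively. The number of subspaces P of F_q^{n₁+n₂+n₃} with dim P = k₁, dim(P ∩ E₂) = k₂, and dim(P ∩ E₃) = k₃ equals [n₃ choose k₃]_q · q^{(k₂−k₃)(n₃−k₃)} · [n₂ choose k₂−k₃]_q · q^{(k₁−k₂)(n₂+n₃−k₂)} · [n₁ choose k₁−k₂]_q, provided 0 ≤ k₁−k₂ ≤ n₁, 0 ≤ k₂−k₃ ≤ n₂, and 0 ≤ k₃ ≤ n₃. -/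
/-- Gaussian binomial coefficient, via the q-Pascal recursion. -/
def gaussBinom (q : ℕ) : ℕ → ℕ → ℕ
  | _, 0 => 1
  | 0, _ + 1 => 0
  | m + 1, i + 1 => gaussBinom q m i + q ^ (i + 1) * gaussBinom q m (i + 1)

/-- The subspace of `F^N` spanned by the standard basis vectors `e_j` with `c ≤ j`
(0-indexed), i.e. by the last `N - c` standard basis vectors. -/
def lastSpan (F : Type) [Field F] (N c : ℕ) : Submodule F (Fin N → F) :=
  Submodule.span F {v | ∃ j : Fin N, c ≤ (j : ℕ) ∧ v = Pi.single j 1}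

/-!
Fibre the subspaces `P` over `Q = P ⊓ E₂`, and inside `E₂` over `Q ⊓ E₃`. For `Q ≤ W`, the
subspaces `P` with `P ⊓ W = Q` are the preimages of the subspaces of `V ⧸ Q` meeting `W ⧸ Q`
trivially, and after splitting `V ⧸ Q = A ⊕ W ⧸ Q` these are exactly the graphs of linear maps
`S → W ⧸ Q` with `S ≤ A`. Hence each fibre has `q^((k-j)(dim W-j)) [dim V - dim W, k-j]_q`
elements. The same count for a line `W` yields the `q`-Pascal recursion, which is how
`[n, k]_q` is identified with the number of `k`-dimensional subspaces of `F_q^n`.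
-/

open Module Submodule

theorem gaussBinom_zero_right (q m : ℕ) : gaussBinom q m 0 = 1 := by
  cases m <;> rfl

section LinearAlgebra

variable {K V W : Type*} [DivisionRing K] [AddCommGroup V] [Module K V]
  [AddCommGroup W] [Module K W]

theorem finrank_map_eq_of_disjoint_ker (f : V →ₗ[K] W) {L : Submodule K V}
    (h : Disjoint L (LinearMap.ker f)) : finrank K (L.map f) = finrank K L := by
  rw [← LinearMap.range_domRestrict]
  exact LinearMap.finrank_range_of_inj (LinearMap.injective_domRestrict_iff.mpr h)

theorem LinearPMap.disjoint_graph_ker_fst (f : V →ₗ.[K] W) :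
    Disjoint f.graph (LinearMap.ker (LinearMap.fst K V W)) :=
  disjoint_def.mpr fun x hx hx0 => Prod.ext hx0 (f.graph_fst_eq_zero_snd (x := x.1) hx hx0)

theorem snd_eq_zero_of_disjoint_ker_fst {g : Submodule K (V × W)}
    (h : Disjoint g (LinearMap.ker (LinearMap.fst K V W))) : ∀ x ∈ g, x.1 = 0 → x.2 = 0 :=
  fun x hx hx0 => congrArg Prod.snd (disjoint_def.mp h x hx hx0)

noncomputable def linearPMapEquivGraph :
    (V →ₗ.[K] W) ≃
      {g : Submodule K (V × W) // Disjoint g (LinearMap.ker (LinearMap.fst K V W))} where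
  toFun f := ⟨f.graph, f.disjoint_graph_ker_fst⟩
  invFun g := g.1.toLinearPMap
  left_inv f := LinearPMap.eq_of_eq_graph
    (toLinearPMap_graph_eq _ (snd_eq_zero_of_disjoint_ker_fst f.disjoint_graph_ker_fst))
  right_inv g := Subtype.ext (toLinearPMap_graph_eq _ (snd_eq_zero_of_disjoint_ker_fst g.2))

def linearPMapEquivSigma (P : Submodule K V → Prop) : {f : V →ₗ.[K] W // P f.domain} ≃
    Σ S : {S : Submodule K V // P S}, (S.1 →ₗ[K] W) where
  toFun f := ⟨⟨f.1.domain, f.2⟩, f.1.toFun⟩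
  invFun x := ⟨⟨x.1.1, x.2⟩, x.1.2⟩
  left_inv _ := rfl
  right_inv _ := rfl

theorem LinearPMap.finrank_graph (f : V →ₗ.[K] W) : finrank K f.graph = finrank K f.domain := by
  rw [← f.graph_map_fst_eq_domain, finrank_map_eq_of_disjoint_ker _ f.disjoint_graph_ker_fst]

theorem finrank_comap_subtype_of_le {U W : Submodule K V} (h : U ≤ W) :
    finrank K (U.comap W.subtype) = finrank K U := by
  rw [← finrank_map_subtype_eq, map_comap_subtype, inf_eq_right.mpr h]

theorem card_ge_and_eq_card_quotient (p : Submodule K V) (R : Submodule K V → Prop) :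
    Nat.card {S : Submodule K V // p ≤ S ∧ R S} =
      Nat.card {S : Submodule K (V ⧸ p) // R (S.comap p.mkQ)} :=
  Nat.card_congr (((comapMkQRelIso p).toEquiv.subtypeEquiv (q := fun S => R S.1)
    fun _ => Iff.rfl).trans (Equiv.subtypeSubtypeEquivSubtypeInter (· ∈ Set.Ici p) R)).symm

theorem card_le_and_eq_card_submodule (W : Submodule K V) (R : Submodule K V → Prop) :
    Nat.card {S : Submodule K V // S ≤ W ∧ R S} =
      Nat.card {T : Submodule K W // R (T.map W.subtype)} :=
  Nat.card_congr (((MapSubtype.orderIso W).toEquiv.subtypeEquiv (q := fun S => R S.1)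
    fun _ => Iff.rfl).trans (Equiv.subtypeSubtypeEquivSubtypeInter (· ≤ W) R)).symm

variable [FiniteDimensional K V]

theorem finrank_comap_mkQ (p : Submodule K V) (S : Submodule K (V ⧸ p)) :
    finrank K (S.comap p.mkQ) = finrank K S + finrank K p := by
  have h := LinearMap.finrank_range_add_finrank_ker (p.mkQ.domRestrict (S.comap p.mkQ))
  rw [LinearMap.range_domRestrict, map_comap_eq_of_surjective p.mkQ_surjective,
    LinearMap.ker_domRestrict, ker_mkQ,
    finrank_comap_subtype_of_le (fun x hx => by simp [(Quotient.mk_eq_zero p).mpr hx])] at h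
  exact h.symm

theorem finrank_map_mkQ {p W : Submodule K V} (h : p ≤ W) :
    finrank K (W.map p.mkQ) = finrank K W - finrank K p := by
  have := finrank_comap_mkQ p (W.map p.mkQ)
  rw [comap_map_mkQ, sup_eq_right.mpr h] at this
  omega

theorem card_finrank_eq_zero : Nat.card {S : Submodule K V // finrank K S = 0} = 1 := by
  rw [Nat.card_congr (Equiv.subtypeEquivRight fun S => Submodule.finrank_eq_zero)]
  simp

end LinearAlgebra

theorem Nat.card_eq_card_and_add_card_and_not {α : Type*} [Finite α] (p r : α → Prop) :
    Nat.card {a // p a} = Nat.card {a // p a ∧ r a} + Nat.card {a // p a ∧ ¬ r a} := by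
  classical
  rw [← Nat.card_sum]
  exact Nat.card_congr ((Equiv.sumCompl fun a : {a // p a} => r a).symm.trans
    (Equiv.sumCongr (Equiv.subtypeSubtypeEquivSubtypeInter p r)
      (Equiv.subtypeSubtypeEquivSubtypeInter p fun a => ¬ r a)))

theorem Nat.card_sigma_of_card_eq {ι : Type*} {β : ι → Type*} [Finite ι] [∀ i, Finite (β i)]
    {c : ℕ} (h : ∀ i, Nat.card (β i) = c) : Nat.card (Σ i, β i) = Nat.card ι * c := by
  have := Fintype.ofFinite ι
  rw [Nat.card_sigma, Finset.sum_congr rfl fun i _ => h i, Finset.sum_const, smul_eq_mul,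
    Finset.card_univ, Nat.card_eq_fintype_card]

theorem Nat.card_eq_card_mul_of_card_fiber {α β : Type*} [Finite α] [Finite β] {p : α → Prop}
    {r : β → Prop} (f : α → β) (hf : ∀ a, p a → r (f a)) {c : ℕ}
    (hc : ∀ b, r b → Nat.card {a // p a ∧ f a = b} = c) :
    Nat.card {a // p a} = Nat.card {b // r b} * c := by
  let g : {a // p a} → {b // r b} := fun a => ⟨f a, hf a a.2⟩
  rw [← Nat.card_congr (Equiv.sigmaFiberEquiv g), Nat.card_sigma_of_card_eq fun b => ?_]
  rw [← hc b b.2]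
  exact Nat.card_congr ((Equiv.subtypeEquivRight fun _ => Subtype.ext_iff).trans
    (Equiv.subtypeSubtypeEquivSubtypeInter p (f · = b.1)))

instance {F V : Type*} [Field F] [Finite F] [AddCommGroup V] [Module F V] [FiniteDimensional F V] :
    Finite (Submodule F V) :=
  have : Finite V := Module.finite_of_finite F
  Finite.of_injective _ SetLike.coe_injective

section Counting

variable {F V W : Type*} [Field F] [Fintype F] [AddCommGroup V] [Module F V] [FiniteDimensional F V]
  [AddCommGroup W] [Module F W] [FiniteDimensional F W]

theorem card_linearMap : Nat.card (V →ₗ[F] W) = Fintype.card F ^ (finrank F V * finrank F W) := by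
  rw [Module.natCard_eq_pow_finrank (K := F), finrank_linearMap, Nat.card_eq_fintype_card]

theorem card_finrank_disjoint_ker_fst (m : ℕ) :
    Nat.card {g : Submodule F (V × W) //
        finrank F g = m ∧ Disjoint g (LinearMap.ker (LinearMap.fst F V W))} =
      Nat.card {S : Submodule F V // finrank F S = m} * Fintype.card F ^ (m * finrank F W) := by
  have : ∀ S : Submodule F V, Finite (S →ₗ[F] W) := fun _ => Module.finite_of_finite F
  calc _ = Nat.card {g : {g : Submodule F (V × W) //
          Disjoint g (LinearMap.ker (LinearMap.fst F V W))} // finrank F g.1 = m} :=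
        Nat.card_congr ((Equiv.subtypeSubtypeEquivSubtypeInter _ _).trans
          (Equiv.subtypeEquivRight fun _ => and_comm)).symm
    _ = Nat.card {f : V →ₗ.[F] W // finrank F f.domain = m} :=
        Nat.card_congr (linearPMapEquivGraph.subtypeEquiv fun f => by
          rw [← f.finrank_graph]; rfl).symm
    _ = Nat.card (Σ S : {S : Submodule F V // finrank F S = m}, (S.1 →ₗ[F] W)) :=
        Nat.card_congr (linearPMapEquivSigma (finrank F ↥· = m))
    _ = _ := Nat.card_sigma_of_card_eq fun S => by rw [card_linearMap, S.2]

theorem card_finrank_disjoint_of_isCompl {A W : Submodule F V} (h : IsCompl A W) (m : ℕ) :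
    Nat.card {P : Submodule F V // finrank F P = m ∧ Disjoint P W} =
      Nat.card {S : Submodule F A // finrank F S = m} * Fintype.card F ^ (m * finrank F W) := by
  let e := prodEquivOfIsCompl A W h
  have hW : (LinearMap.ker (LinearMap.fst F A W)).map (e : A × W →ₗ[F] V) = W := by
    have : (e : A × W →ₗ[F] V) ∘ₗ LinearMap.inr F A W = W.subtype := by ext; simp [e]
    rw [LinearMap.ker_fst, ← LinearMap.range_comp, this, range_subtype]
  rw [← card_finrank_disjoint_ker_fst]
  refine Nat.card_congr ((orderIsoMapComap e).toEquiv.subtypeEquiv fun g => ?_).symm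
  have := disjoint_map_orderIso_iff (orderIsoMapComap e) (a := g)
    (b := LinearMap.ker (LinearMap.fst F A W))
  simp only [orderIsoMapComap_apply, hW] at this
  rw [OrderIso.coe_toEquiv, orderIsoMapComap_apply, LinearEquiv.finrank_map_eq, this]

theorem card_finrank_eq_gaussBinom {n : ℕ} (hn : finrank F V = n) (i : ℕ) :
    Nat.card {S : Submodule F V // finrank F S = i} = gaussBinom (Fintype.card F) n i := by
  induction n generalizing V i with
  | zero =>
    cases i with
    | zero => rw [card_finrank_eq_zero, gaussBinom_zero_right]
    | succ i =>
      have : IsEmpty {S : Submodule F V // finrank F S = i + 1} :=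
        ⟨fun S => by have := S.1.finrank_le; omega⟩
      exact Nat.card_of_isEmpty
  | succ n ih =>
    cases i with
    | zero => rw [card_finrank_eq_zero, gaussBinom_zero_right]
    | succ i =>
      have : Nontrivial V := Module.nontrivial_of_finrank_pos (R := F) (by omega)
      obtain ⟨x, hx⟩ := exists_ne (0 : V)
      obtain ⟨A, hA⟩ := (span F {x}).exists_isCompl
      have hx1 : finrank F (span F {x}) = 1 := finrank_span_singleton hx
      have hA' := finrank_add_eq_of_isCompl hA
      have hquot := (span F {x}).finrank_quotient_add_finrank
      have hcontain : Nat.card {S : Submodule F V // finrank F S = i + 1 ∧ span F {x} ≤ S} =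
          gaussBinom (Fintype.card F) n i := by
        rw [Nat.card_congr (Equiv.subtypeEquivRight fun _ => and_comm),
          card_ge_and_eq_card_quotient]
        simp_rw [finrank_comap_mkQ, hx1, Nat.add_right_cancel_iff]
        exact ih (by omega) i
      have hmiss : Nat.card {S : Submodule F V // finrank F S = i + 1 ∧ ¬ span F {x} ≤ S} =
          Fintype.card F ^ (i + 1) * gaussBinom (Fintype.card F) n (i + 1) := by
        simp_rw [span_singleton_le_iff_mem, ← disjoint_span_singleton' hx]
        rw [card_finrank_disjoint_of_isCompl hA.symm, ih (by omega), hx1, mul_one, mul_comm]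
      rw [Nat.card_eq_card_and_add_card_and_not _ (span F {x} ≤ ·), hcontain, hmiss]
      rfl

theorem card_finrank_disjoint (W : Submodule F V) (m : ℕ) :
    Nat.card {P : Submodule F V // finrank F P = m ∧ Disjoint P W} =
      Fintype.card F ^ (m * finrank F W) *
        gaussBinom (Fintype.card F) (finrank F V - finrank F W) m := by
  obtain ⟨A, hA⟩ := W.exists_isCompl
  have := finrank_add_eq_of_isCompl hA
  rw [card_finrank_disjoint_of_isCompl hA.symm,
    card_finrank_eq_gaussBinom (n := finrank F V - finrank F W) (by omega), mul_comm]

theorem card_finrank_inf_eq {Q W : Submodule F V} (hQW : Q ≤ W) {k : ℕ} (hk : finrank F Q ≤ k) :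
    Nat.card {P : Submodule F V // finrank F P = k ∧ P ⊓ W = Q} =
      Fintype.card F ^ ((k - finrank F Q) * (finrank F W - finrank F Q)) *
        gaussBinom (Fintype.card F) (finrank F V - finrank F W) (k - finrank F Q) := by
  have hdisj (S : Submodule F (V ⧸ Q)) : S.comap Q.mkQ ⊓ W = Q ↔ Disjoint S (W.map Q.mkQ) := by
    rw [disjoint_iff, ← (comap_injective_of_surjective Q.mkQ_surjective).eq_iff, comap_inf,
      comap_map_mkQ, sup_eq_right.mpr hQW, comap_bot, ker_mkQ]
  have hrank (S : Submodule F (V ⧸ Q)) :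
      finrank F S + finrank F Q = k ↔ finrank F S = k - finrank F Q := by omega
  have hge (P : Submodule F V) :
      finrank F P = k ∧ P ⊓ W = Q ↔ Q ≤ P ∧ finrank F P = k ∧ P ⊓ W = Q :=
    ⟨fun h => ⟨h.2 ▸ inf_le_left, h⟩, And.right⟩
  have hcodim : finrank F (V ⧸ Q) - (finrank F W - finrank F Q) = finrank F V - finrank F W := by
    have := Q.finrank_quotient_add_finrank
    have := W.finrank_le
    have := Submodule.finrank_mono hQW
    omega
  rw [Nat.card_congr (Equiv.subtypeEquivRight hge), card_ge_and_eq_card_quotient]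
  simp_rw [finrank_comap_mkQ, hdisj, hrank]
  rw [card_finrank_disjoint, finrank_map_mkQ hQW, hcodim]

theorem card_finrank_and_inf {W : Submodule F V} {j k : ℕ} (hjk : j ≤ k)
    (R : Submodule F V → Prop) (hR : ∀ Q, R Q → finrank F Q = j) :
    Nat.card {P : Submodule F V // finrank F P = k ∧ R (P ⊓ W)} =
      Nat.card {Q : Submodule F V // Q ≤ W ∧ R Q} *
        (Fintype.card F ^ ((k - j) * (finrank F W - j)) *
          gaussBinom (Fintype.card F) (finrank F V - finrank F W) (k - j)) := by
  refine Nat.card_eq_card_mul_of_card_fiber (· ⊓ W) (fun P hP => ⟨inf_le_right, hP.2⟩) ?_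
  rintro Q ⟨hQW, hQ⟩
  have hfiber (P : Submodule F V) :
      (finrank F P = k ∧ R (P ⊓ W)) ∧ P ⊓ W = Q ↔ finrank F P = k ∧ P ⊓ W = Q :=
    ⟨fun h => ⟨h.1.1, h.2⟩, fun h => ⟨⟨h.1, h.2 ▸ hQ⟩, h.2⟩⟩
  rw [Nat.card_congr (Equiv.subtypeEquivRight hfiber), card_finrank_inf_eq hQW (hR Q hQ ▸ hjk),
    hR Q hQ]

theorem card_finrank_and_finrank_inf (W : Submodule F V) {j k : ℕ} (hjk : j ≤ k) :
    Nat.card {P : Submodule F V // finrank F P = k ∧ finrank F ↥(P ⊓ W) = j} =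
      gaussBinom (Fintype.card F) (finrank F W) j *
        (Fintype.card F ^ ((k - j) * (finrank F W - j)) *
          gaussBinom (Fintype.card F) (finrank F V - finrank F W) (k - j)) := by
  rw [card_finrank_and_inf hjk (finrank F ↥· = j) fun _ => id, card_le_and_eq_card_submodule]
  simp_rw [finrank_map_subtype_eq]
  rw [card_finrank_eq_gaussBinom rfl]

theorem card_finrank_and_finrank_inf_and_finrank_inf {U W : Submodule F V} (hUW : U ≤ W)
    {l j k : ℕ} (hlj : l ≤ j) (hjk : j ≤ k) :
    Nat.card {P : Submodule F V // finrank F P = k ∧ finrank F ↥(P ⊓ W) = j ∧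
        finrank F ↥(P ⊓ U) = l} =
      gaussBinom (Fintype.card F) (finrank F U) l *
          (Fintype.card F ^ ((j - l) * (finrank F U - l)) *
            gaussBinom (Fintype.card F) (finrank F W - finrank F U) (j - l)) *
        (Fintype.card F ^ ((k - j) * (finrank F W - j)) *
          gaussBinom (Fintype.card F) (finrank F V - finrank F W) (k - j)) := by
  have hPU (P : Submodule F V) :
      finrank F ↥(P ⊓ W) = j ∧ finrank F ↥(P ⊓ U) = l ↔
        finrank F ↥(P ⊓ W) = j ∧ finrank F ↥(P ⊓ W ⊓ U) = l := by
    rw [inf_assoc, inf_eq_right.mpr hUW]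
  have hTU (T : Submodule F W) :
      finrank F ↥(T.map W.subtype ⊓ U) = finrank F ↥(T ⊓ U.comap W.subtype) := by
    rw [← finrank_map_subtype_eq W, map_inf _ W.injective_subtype, map_comap_subtype,
      inf_eq_right.mpr hUW]
  rw [Nat.card_congr (Equiv.subtypeEquivRight fun P => and_congr_right' (hPU P)),
    card_finrank_and_inf hjk (fun Q => finrank F Q = j ∧ finrank F ↥(Q ⊓ U) = l)
      fun _ => And.left, card_le_and_eq_card_submodule]
  simp_rw [hTU, finrank_map_subtype_eq]
  rw [card_finrank_and_finrank_inf _ hlj, finrank_comap_subtype_of_le hUW]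

end Counting

theorem lastSpan_anti (F : Type) [Field F] {N c d : ℕ} (h : c ≤ d) :
    lastSpan F N d ≤ lastSpan F N c :=
  span_mono fun _ ⟨j, hj, hv⟩ => ⟨j, h.trans hj, hv⟩

theorem finrank_lastSpan (F : Type) [Field F] (N c : ℕ) :
    finrank F (lastSpan F N c) = N - c := by
  have hspan : lastSpan F N c =
      span F (Set.range (Pi.basisFun F (Fin N) ∘ (↑) : {j : Fin N // c ≤ (j : ℕ)} → _)) := by
    rw [lastSpan]
    congr 1
    ext v
    simp [eq_comm]
  rw [hspan, finrank_span_eq_card ((Pi.basisFun F (Fin N)).linearIndependent.comp _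
    Subtype.val_injective)]
  simp_rw [← not_lt]
  rw [Fintype.card_subtype_compl, Fintype.card_subtype, Fin.card_filter_val_lt, Fintype.card_fin]
  omega

theorem stmt6_general {F : Type} [Field F] [Fintype F] (q n₁ n₂ n₃ k₁ k₂ k₃ : ℕ)
    (hq : Fintype.card F = q)
    (h21 : k₂ ≤ k₁) (h32 : k₃ ≤ k₂) :
    Nat.card {P : Submodule F (Fin (n₁ + n₂ + n₃) → F) //
        Module.finrank F P = k₁ ∧
        Module.finrank F ↥(P ⊓ lastSpan F (n₁ + n₂ + n₃) n₁) = k₂ ∧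
        Module.finrank F ↥(P ⊓ lastSpan F (n₁ + n₂ + n₃) (n₁ + n₂)) = k₃} =
      gaussBinom q n₃ k₃ * (q ^ ((k₂ - k₃) * (n₃ - k₃)) * gaussBinom q n₂ (k₂ - k₃)) *
        (q ^ ((k₁ - k₂) * (n₂ + n₃ - k₂)) * gaussBinom q n₁ (k₁ - k₂)) := by
  subst hq
  rw [card_finrank_and_finrank_inf_and_finrank_inf (lastSpan_anti F (Nat.le_add_right n₁ n₂))
      h32 h21, finrank_lastSpan, finrank_lastSpan, finrank_fin_fun]
  rw [show n₁ + n₂ + n₃ - (n₁ + n₂) = n₃ by omega, show n₁ + n₂ + n₃ - n₁ = n₂ + n₃ by omega,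
    show n₂ + n₃ - n₃ = n₂ by omega, show n₁ + n₂ + n₃ - (n₂ + n₃) = n₁ by omega]

/-- The number of subspaces of type `(k₁,k₂,k₃)` of `F_q^{n₁+n₂+n₃}`. -/
theorem stmt6 {F : Type} [Field F] [Fintype F] (q n₁ n₂ n₃ k₁ k₂ k₃ : ℕ)
    (hq : Fintype.card F = q)
    (h21 : k₂ ≤ k₁) (h1 : k₁ - k₂ ≤ n₁) (h32 : k₃ ≤ k₂) (h2 : k₂ - k₃ ≤ n₂) (h3 : k₃ ≤ n₃) :
    Nat.card {P : Submodule F (Fin (n₁ + n₂ + n₃) → F) //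
        Module.finrank F P = k₁ ∧
        Module.finrank F ↥(P ⊓ lastSpan F (n₁ + n₂ + n₃) n₁) = k₂ ∧
        Module.finrank F ↥(P ⊓ lastSpan F (n₁ + n₂ + n₃) (n₁ + n₂)) = k₃} =
      gaussBinom q n₃ k₃ * (q ^ ((k₂ - k₃) * (n₃ - k₃)) * gaussBinom q n₂ (k₂ - k₃)) *
        (q ^ ((k₁ - k₂) * (n₂ + n₃ - k₂)) * gaussBinom q n₁ (k₁ - k₂)) :=
  stmt6_general q n₁ n₂ n₃ k₁ k₂ k₃ hq h21 h32
end

section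
/- If a block upper-triangular invertible matrix U (with diagonal blocks of sizes k₁−k₂, k₂−k₃, …, k_{t−1}−k_t, k_t) satisfies U·Q = Q, where Q is the k₁×(n₁+⋯+n_t) matrix in the canonical form of a subspace of type (k₁,…,k_t) whose i-th block row, of height k_i−k_{i+1}, is of the form (I 0), then U is the identity matrix. Consequently, each subspace of type (k₁,…,k_t) has exactly |GL_{k₁−k₂,…,k_t}(F_q)| matrix representations of the echelon block upper-triangular form. -/
open Classical Module


/-- `P` is a subspace of type `(k 0, k 1, …, k (t-1))` of `F_q^{n 0 + ⋯ + n (t-1)}`. -/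
def IsTypeP (F : Type) [Field F] (t : ℕ) (n k : ℕ → ℕ)
    (P : Submodule F (Fin (∑ m ∈ Finset.range t, n m) → F)) : Prop :=
  Module.finrank F P = k 0 ∧
    ∀ i, 1 ≤ i → i < t →
      Module.finrank F
        ↥(P ⊓ lastSpan F (∑ m ∈ Finset.range t, n m) (∑ j ∈ Finset.range i, n j)) = k i

/-- The canonical matrix representation of the subspace of type `(k 0, …, k (t-1))`
(with the convention `k t = 0`): the `i`-th block row (of height `k i - k (i+1)`)
is `(I 0)` placed in the `i`-th column block. -/
noncomputable def Qcan (F : Type) [Field F] (t : ℕ) (n k : ℕ → ℕ) :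
    Matrix (Fin (k 0)) (Fin (∑ m ∈ Finset.range t, n m)) F := fun r c =>
  if ∃ i < t, (∑ j ∈ Finset.range i, (k j - k (j + 1))) ≤ (r : ℕ) ∧
      (r : ℕ) < (∑ j ∈ Finset.range (i + 1), (k j - k (j + 1))) ∧
      (c : ℕ) = (∑ j ∈ Finset.range i, n j) +
        ((r : ℕ) - ∑ j ∈ Finset.range i, (k j - k (j + 1)))
  then 1 else 0

/-- `U` is block upper triangular with respect to the partition
`k 0 - k 1, k 1 - k 2, …, k (t-1) - k t` of `k 0`. -/
def BlockUTk (F : Type) [Field F] (t : ℕ) (k : ℕ → ℕ)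
    (U : Matrix (Fin (k 0)) (Fin (k 0)) F) : Prop :=
  ∀ i < t, ∀ r c : Fin (k 0),
    (c : ℕ) < (∑ j ∈ Finset.range i, (k j - k (j + 1))) →
    (∑ j ∈ Finset.range i, (k j - k (j + 1))) ≤ (r : ℕ) → U r c = 0

/-- `M` is a matrix representation in echelon block upper-triangular form: all entries
below the block "staircase" (row blocks of sizes `k i - k (i+1)`, column blocks of
sizes `n i`) vanish. -/
def EchelonBUT (F : Type) [Field F] (t : ℕ) (n k : ℕ → ℕ)
    (M : Matrix (Fin (k 0)) (Fin (∑ m ∈ Finset.range t, n m)) F) : Prop :=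
  ∀ i < t, ∀ r : Fin (k 0), ∀ c : Fin (∑ m ∈ Finset.range t, n m),
    (c : ℕ) < (∑ j ∈ Finset.range i, n j) →
    (∑ j ∈ Finset.range i, (k j - k (j + 1))) ≤ (r : ℕ) → M r c = 0



lemma mem_lastSpan_iff {F : Type} [Field F] {N c : ℕ} (v : Fin N → F) :
    v ∈ lastSpan F N c ↔ ∀ j : Fin N, (j : ℕ) < c → v j = 0 := by
  constructor
  · intro hv
    induction hv using Submodule.span_induction with
    | mem x hx =>
      obtain ⟨jx, hjx, rfl⟩ := hx
      intro j hj
      have hne : j ≠ jx := by intro h; subst h; omega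
      simp [Pi.single_apply, hne]
    | zero => intro j hj; rfl
    | add x y _ _ hx hy => intro j hj; simp [hx j hj, hy j hj]
    | smul a x _ hx => intro j hj; simp [hx j hj]
  · intro h
    have hv : v = ∑ j : Fin N, Pi.single j (v j) := (Finset.univ_sum_single v).symm
    rw [hv]
    apply Submodule.sum_mem
    intro j _
    by_cases hj : (j : ℕ) < c
    · rw [h j hj]; simp
    · have heq : Pi.single j (v j) = (v j) • (Pi.single j (1 : F) : Fin N → F) := by
        ext j'
        simp only [Pi.smul_apply, Pi.single_apply, smul_eq_mul]
        split <;> simp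
      rw [heq]
      exact Submodule.smul_mem _ _ (Submodule.subset_span ⟨j, not_lt.1 hj, rfl⟩)

lemma lastSpan_zero {F : Type} [Field F] (N : ℕ) : lastSpan F N 0 = ⊤ := by
  rw [eq_top_iff]
  intro v _
  exact (mem_lastSpan_iff v).2 (fun j hj => absurd hj (by omega))

lemma lastSpan_self {F : Type} [Field F] (N : ℕ) : lastSpan F N N = ⊥ := by
  rw [eq_bot_iff]
  intro v hv
  have h := (mem_lastSpan_iff v).1 hv
  have hv0 : v = 0 := funext fun j => h j j.isLt
  simp [hv0]

lemma lastSpan_antitone {F : Type} [Field F] (N : ℕ) {c c' : ℕ} (h : c ≤ c') :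
    lastSpan F N c' ≤ lastSpan F N c := by
  apply Submodule.span_le.2
  rintro x ⟨j, hj, rfl⟩
  exact Submodule.subset_span ⟨j, le_trans h hj, rfl⟩
section ext

variable {F : Type} [Field F] {E : Type} [AddCommGroup E] [Module F E]

lemma extend_step [FiniteDimensional F E] (A B : Submodule F E) (hle : B ≤ A)
    {m d : ℕ} (hd : finrank F A = d + finrank F B)
    (v' : Fin m → E) (hind : LinearIndependent F v')
    (hspan : Submodule.span F (Set.range v') = B) :
    ∃ v : Fin (d + m) → E, LinearIndependent F v ∧
      Submodule.span F (Set.range v) = A ∧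
      (∀ r : Fin (d + m), v r ∈ A) ∧
      (∀ r : Fin (d + m), ∀ h : d ≤ (r : ℕ), v r = v' ⟨(r : ℕ) - d, by omega⟩) := by
  obtain ⟨q, hq⟩ := Submodule.exists_isCompl (Submodule.comap A.subtype B)
  set C : Submodule F E := Submodule.map A.subtype q with hC
  have hsub_inj : Function.Injective A.subtype := Submodule.injective_subtype A
  have hBmap : Submodule.map A.subtype (Submodule.comap A.subtype B) = B := by
    rw [Submodule.map_comap_subtype]; exact inf_eq_right.2 hle
  have hsup : C ⊔ B = A := by
    rw [hC, ← hBmap, ← Submodule.map_sup, sup_comm, hq.sup_eq_top, Submodule.map_top,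
      Submodule.range_subtype]
  have hinf : C ⊓ B = ⊥ := by
    rw [hC, ← hBmap, ← Submodule.map_inf _ hsub_inj, inf_comm, hq.inf_eq_bot,
      Submodule.map_bot]
  have hCA : C ≤ A := le_sup_left.trans hsup.le
  have hBA : FiniteDimensional F ↥A := FiniteDimensional.finiteDimensional_submodule A
  have hCd : finrank F ↥C = d := by
    have h2 := Submodule.finrank_sup_add_finrank_inf_eq C B
    rw [hsup, hinf] at h2
    have h3 : finrank F (⊥ : Submodule F E) = 0 := finrank_bot F E
    omega
  let bC := Module.finBasis F ↥C
  let w : Fin d → E := C.subtype ∘ (bC ∘ Fin.cast hCd.symm)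
  have hw_li : LinearIndependent F w :=
    ((bC.linearIndependent.comp _ (Fin.cast_injective _)).map' C.subtype
      (Submodule.ker_subtype C))
  have hw_span : Submodule.span F (Set.range w) = C := by
    have h1 : Set.range w = C.subtype '' Set.range (bC ∘ Fin.cast hCd.symm) :=
      Set.range_comp _ _
    have h2 : Set.range (bC ∘ Fin.cast hCd.symm) = Set.range bC :=
      Function.Surjective.range_comp (fun j => ⟨Fin.cast hCd j, by apply Fin.ext; simp⟩) _
    rw [h1, h2, Submodule.span_image, bC.span_eq, Submodule.map_top, Submodule.range_subtype]
  have hw_mem : ∀ r, w r ∈ A := fun r => hCA (SetLike.coe_mem _)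
  have hv'_mem : ∀ r, v' r ∈ B := fun r =>
    hspan ▸ Submodule.subset_span (Set.mem_range_self r)
  refine ⟨fun r => if h : (r : ℕ) < d then w ⟨r, h⟩ else v' ⟨(r : ℕ) - d, by omega⟩, ?_, ?_, ?_, ?_⟩
  case _ =>
    have hdisj : Disjoint (Submodule.span F (Set.range w)) (Submodule.span F (Set.range v')) := by
      rw [hw_span, hspan]; exact disjoint_iff.2 hinf
    have hsum := (hw_li.sum_type hind hdisj).comp _ (finSumFinEquiv.symm.injective)
    convert hsum using 1
    case e'_5 => rfl
    funext r
    by_cases h : (r : ℕ) < d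
    · have he : finSumFinEquiv.symm r = Sum.inl ⟨(r : ℕ), h⟩ := by
        rw [Equiv.symm_apply_eq]; apply Fin.ext; simp
      simp [Function.comp, he, h]
    · have he : finSumFinEquiv.symm r = Sum.inr ⟨(r : ℕ) - d, by omega⟩ := by
        rw [Equiv.symm_apply_eq]; apply Fin.ext; simp; omega
      simp [Function.comp, he, h]
  case _ =>
    have h1 : Set.range (fun r : Fin (d + m) =>
        if h : (r : ℕ) < d then w ⟨r, h⟩ else v' ⟨(r : ℕ) - d, by omega⟩)
        = Set.range w ∪ Set.range v' := by
      apply Set.Subset.antisymm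
      · rintro x ⟨r, rfl⟩
        by_cases h : (r : ℕ) < d
        · exact Or.inl ⟨⟨r, h⟩, by simp [h]⟩
        · exact Or.inr ⟨⟨(r : ℕ) - d, by omega⟩, by simp [h]⟩
      · rintro x (⟨r, rfl⟩ | ⟨r, rfl⟩)
        · refine ⟨⟨(r : ℕ), by omega⟩, ?_⟩
          have h : ((⟨(r : ℕ), by omega⟩ : Fin (d + m)) : ℕ) < d := r.isLt
          simp only [dif_pos h]
        · refine ⟨⟨d + (r : ℕ), by omega⟩, ?_⟩
          have h : ¬ ((⟨d + (r : ℕ), by omega⟩ : Fin (d + m)) : ℕ) < d := by simp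
          simp only [dif_neg h]
          congr 1
          apply Fin.ext; simp
    rw [h1, Submodule.span_union, hw_span, hspan, hsup]
  case _ =>
    intro r
    by_cases h : (r : ℕ) < d
    · simp only [dif_pos h]; exact hw_mem _
    · simp only [dif_neg h]; exact hle (hv'_mem _)
  case _ =>
    intro r h
    have h' : ¬ (r : ℕ) < d := by omega
    simp only [dif_neg h']
variable {F : Type} [Field F] {E : Type} [AddCommGroup E] [Module F E]

lemma adapted_basis [FiniteDimensional F E] (t : ℕ) (k : ℕ → ℕ) (V : ℕ → Submodule F E)
    (hmono : ∀ i < t, V (i + 1) ≤ V i)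
    (hdim : ∀ i ≤ t, finrank F (V i) = k i)
    (hkk : ∀ i < t, k (i + 1) ≤ k i)
    (hVt : V t = ⊥) (hkt : k t = 0) :
    ∃ v : Fin (k 0) → E, LinearIndependent F v ∧
      Submodule.span F (Set.range v) = V 0 ∧
      ∀ i ≤ t, ∀ r : Fin (k 0), k 0 - k i ≤ (r : ℕ) → v r ∈ V i := by
  -- antitonicity of k on [0, t]
  have kmono : ∀ a b, a ≤ b → b ≤ t → k b ≤ k a := by
    intro a b hab hbt
    obtain ⟨c, rfl⟩ := Nat.exists_eq_add_of_le hab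
    clear hab
    induction c with
    | zero => simp
    | succ c ih =>
      have h1 : a + c < t := by omega
      exact le_trans (hkk _ h1) (ih (by omega))
  have main : ∀ d i, i + d = t → ∃ v : Fin (k i) → E, LinearIndependent F v ∧
      Submodule.span F (Set.range v) = V i ∧
      ∀ i', i ≤ i' → i' ≤ t → ∀ r : Fin (k i), k i - k i' ≤ (r : ℕ) → v r ∈ V i' := by
    intro d
    induction d with
    | zero =>
      intro i hi
      have hit : i = t := by omega
      subst hit
      haveI : IsEmpty (Fin (k i)) := by rw [show k i = 0 from hkt]; infer_instance
      refine ⟨fun _ => 0, linearIndependent_empty_type, ?_, fun i' _ _ r => (IsEmpty.false r).elim⟩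
      rw [Set.range_eq_empty, Submodule.span_empty, hVt]
    | succ d ih =>
      intro i hi
      obtain ⟨v', h1, h2, h3⟩ := ih (i + 1) (by omega)
      have hit : i < t := by omega
      have hd : finrank F (V i) = (k i - k (i + 1)) + finrank F (V (i + 1)) := by
        rw [hdim i (by omega), hdim (i + 1) (by omega)]
        have := hkk i hit
        omega
      obtain ⟨v, hli, hsp, hmem, htail⟩ :=
        extend_step (V i) (V (i + 1)) (hmono i hit) hd v' h1 h2
      have hki : k i = (k i - k (i + 1)) + k (i + 1) := by
        have := hkk i hit; omega
      refine ⟨fun r => v (Fin.cast hki r), ?_, ?_, ?_⟩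
      · exact hli.comp _ (Fin.cast_injective _)
      · rw [show Set.range (fun r => v (Fin.cast hki r)) = Set.range v from
          Function.Surjective.range_comp (fun j => ⟨Fin.cast hki.symm j, by apply Fin.ext; simp⟩) _,
          hsp]
      · intro i' hii' hi't r hr
        rcases eq_or_lt_of_le hii' with rfl | hlt
        · exact hmem _
        · -- i + 1 ≤ i'
          have hk1 : k i' ≤ k (i + 1) := kmono _ _ (by omega) hi't
          have hrd : k i - k (i + 1) ≤ ((Fin.cast hki r : Fin _) : ℕ) := by
            simp only [Fin.coe_cast]
            have := hkk i hit
            omega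
          show v (Fin.cast hki r) ∈ V i'
          rw [htail _ hrd]
          apply h3 i' (by omega) hi't
          simp only [Fin.coe_cast]
          have := hkk i hit
          omega
  obtain ⟨v, h1, h2, h3⟩ := main t 0 (by omega)
  exact ⟨v, h1, h2, fun i hi r hr => h3 i (by omega) hi r hr⟩
end ext

section arith
variable (t : ℕ) (n k : ℕ → ℕ)

lemma off_eq (hk : ∀ i < t, k (i + 1) ≤ k i) (hk0 : ∀ i ≤ t, k i ≤ k 0) :
    ∀ i ≤ t, (∑ j ∈ Finset.range i, (k j - k (j + 1))) = k 0 - k i := by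
  intro i hi
  induction i with
  | zero => simp
  | succ i ih =>
    rw [Finset.sum_range_succ, ih (by omega)]
    have h1 := hk i (by omega)
    have h2 := hk0 i (by omega)
    omega

lemma k_le_k0 (hk : ∀ i < t, k (i + 1) ≤ k i) : ∀ i ≤ t, k i ≤ k 0 := by
  intro i hi
  induction i with
  | zero => exact le_refl _
  | succ i ih => exact le_trans (hk i (by omega)) (ih (by omega))

lemma Ns_mono : ∀ a b, a ≤ b → (∑ j ∈ Finset.range a, n j) ≤ ∑ j ∈ Finset.range b, n j :=
  fun a b hab => Finset.sum_le_sum_of_subset (Finset.range_subset_range.2 hab)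

end arith

section part1
variable {F : Type} [Field F] (t : ℕ) (ht : 1 ≤ t) (n k : ℕ → ℕ)
    (hk : ∀ i < t, k (i + 1) ≤ k i ∧ k i - k (i + 1) ≤ n i) (hkt : k t = 0)

-- abbreviations
local notation "off" i => (∑ j ∈ Finset.range i, (k j - k (j + 1)))
local notation "Ns" i => (∑ j ∈ Finset.range i, n j)

include hk hkt in
lemma row_block (r : Fin (k 0)) :
    ∃ i < t, (off i) ≤ (r : ℕ) ∧ (r : ℕ) < (off (i + 1)) := by
  have hk1 : ∀ i < t, k (i + 1) ≤ k i := fun i hi => (hk i hi).1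
  have hk0 := k_le_k0 t k hk1
  have hofft : (off t) = k 0 := by
    rw [off_eq t k hk1 hk0 t (le_refl t), hkt]; omega
  set P : ℕ → Prop := fun j => (off j) ≤ (r : ℕ) with hP
  have hP0 : P 0 := by simp [hP]
  have hi0 : 0 ≤ t := Nat.zero_le t
  set i := Nat.findGreatest P t with hidef
  have hPi : P i := Nat.findGreatest_spec hi0 hP0
  have hile : i ≤ t := Nat.findGreatest_le t
  have hnt : ¬ P t := by
    simp only [hP]
    rw [hofft]
    exact not_le.2 r.isLt
  have hit : i < t := by
    rcases eq_or_lt_of_le hile with h | h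
    · exact absurd (h ▸ hPi) hnt
    · exact h
  have hnext : ¬ P (i + 1) := Nat.findGreatest_is_greatest (Nat.lt_succ_self i) (by omega)
  exact ⟨i, hit, hPi, not_le.1 hnext⟩

include hk hkt in
lemma Qcan_col {i : ℕ} (hit : i < t) (r : Fin (k 0))
    (hr1 : (off i) ≤ (r : ℕ)) (hr2 : (r : ℕ) < (off (i + 1)))
    (r' : Fin (k 0)) (c : Fin (∑ m ∈ Finset.range t, n m))
    (hc : (c : ℕ) = (Ns i) + ((r : ℕ) - (off i))) :
    Qcan F t n k r' c = if r' = r then 1 else 0 := by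
  have hk1 : ∀ i < t, k (i + 1) ≤ k i := fun i hi => (hk i hi).1
  unfold Qcan
  split_ifs with h h2 h2
  · rfl
  · -- existential holds but r' ≠ r : contradiction
    exfalso
    obtain ⟨i', hi't, h1', h2', h3'⟩ := h
    have hblk : (off (i' + 1)) = (off i') + (k i' - k (i' + 1)) := Finset.sum_range_succ _ _
    have hblk2 : (off (i + 1)) = (off i) + (k i - k (i + 1)) := Finset.sum_range_succ _ _
    have hNs1 : (Ns (i' + 1)) = (Ns i') + n i' := Finset.sum_range_succ _ _
    have hNs2 : (Ns (i + 1)) = (Ns i) + n i := Finset.sum_range_succ _ _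
    have hni' := (hk i' hi't).2
    have hni := (hk i hit).2
    -- c lies in column block i' and in column block i, so i = i'
    have hii' : i' = i := by
      rcases lt_trichotomy i' i with hlt | heq | hgt
      · have := Ns_mono n (i' + 1) i hlt
        omega
      · exact heq
      · have := Ns_mono n (i + 1) i' hgt
        omega
    subst hii'
    have : (r' : ℕ) = (r : ℕ) := by omega
    exact h2 (Fin.ext this)
  · -- r' = r but existential fails
    exfalso
    subst h2
    exact h ⟨i, hit, hr1, hr2, hc⟩
  · rfl
end part1

section part1b
variable {F : Type} [Field F] {t : ℕ} {n k : ℕ → ℕ}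

lemma part1_main (hk : ∀ i < t, k (i + 1) ≤ k i ∧ k i - k (i + 1) ≤ n i) (hkt : k t = 0)
    (U : Matrix (Fin (k 0)) (Fin (k 0)) F)
    (hUQ : U * Qcan F t n k = Qcan F t n k) : U = 1 := by
  ext r' r
  obtain ⟨i, hit, hr1, hr2⟩ := row_block t n k hk hkt r
  have hblk : (∑ j ∈ Finset.range (i + 1), (k j - k (j + 1)))
      = (∑ j ∈ Finset.range i, (k j - k (j + 1))) + (k i - k (i + 1)) :=
    Finset.sum_range_succ _ _
  have hNs2 : (∑ j ∈ Finset.range (i + 1), n j) = (∑ j ∈ Finset.range i, n j) + n i :=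
    Finset.sum_range_succ _ _
  have hcb : (∑ j ∈ Finset.range i, n j) +
      ((r : ℕ) - (∑ j ∈ Finset.range i, (k j - k (j + 1)))) < ∑ m ∈ Finset.range t, n m := by
    have h1 := (hk i hit).2
    have h2 := Ns_mono n (i + 1) t hit
    omega
  set c : Fin (∑ m ∈ Finset.range t, n m) := ⟨_, hcb⟩ with hc
  have hcol : ∀ s : Fin (k 0), Qcan F t n k s c = if s = r then 1 else 0 := fun s =>
    Qcan_col t n k hk hkt hit r hr1 hr2 s c rfl
  have h := congrFun (congrFun hUQ r') c
  rw [Matrix.mul_apply] at h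
  simp only [hcol, mul_ite, mul_one, mul_zero, Finset.sum_ite_eq', Finset.mem_univ,
    if_true] at h
  rw [h, Matrix.one_apply]
end part1b

section helpers
variable {F : Type} [Field F]

-- rows of a product lie in the span of the rows of the right factor
lemma span_range_mul_le {a b N' : ℕ} (A : Matrix (Fin a) (Fin b) F)
    (B : Matrix (Fin b) (Fin N') F) :
    Submodule.span F (Set.range (A * B)) ≤ Submodule.span F (Set.range B) := by
  rw [Submodule.span_le]
  rintro x ⟨r, rfl⟩
  have hrow : (A * B) r = ∑ s, A r s • B s := by
    funext c
    rw [Matrix.mul_apply, Finset.sum_apply]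
    simp [smul_eq_mul]
  rw [SetLike.mem_coe, hrow]
  exact Submodule.sum_mem _ fun s _ =>
    Submodule.smul_mem _ _ (Submodule.subset_span (Set.mem_range_self s))

lemma span_top_of_map {E : Type} [AddCommGroup E] [Module F E] {ι : Type} {P : Submodule F E}
    (u : ι → ↥P) (h : Submodule.span F (Set.range (fun i => (u i : E))) = P) :
    Submodule.span F (Set.range u) = ⊤ := by
  apply Submodule.map_injective_of_injective (Submodule.injective_subtype P)
  rw [Submodule.map_span, ← Set.range_comp, Submodule.map_top, Submodule.range_subtype]
  exact h

def finTailEquiv (m a : ℕ) : {s : Fin m // a ≤ (s : ℕ)} ≃ Fin (m - a) where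
  toFun s := ⟨(s : Fin m) - a, by have := s.1.isLt; have := s.2; omega⟩
  invFun j := ⟨⟨a + (j : ℕ), by have := j.isLt; omega⟩, by simp⟩
  left_inv s := by
    apply Subtype.ext; apply Fin.ext
    have := s.2
    simp only []
    omega
  right_inv j := by apply Fin.ext; simp

end helpers
section part2
variable {F : Type} [Field F] {t : ℕ} {n k : ℕ → ℕ}

lemma part2_main (ht : 1 ≤ t)
    (hk : ∀ i < t, k (i + 1) ≤ k i ∧ k i - k (i + 1) ≤ n i) (hkt : k t = 0)
    (P : Submodule F (Fin (∑ m ∈ Finset.range t, n m) → F)) (hP : IsTypeP F t n k P) :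
    Nat.card {M : Matrix (Fin (k 0)) (Fin (∑ m ∈ Finset.range t, n m)) F //
        EchelonBUT F t n k M ∧ Submodule.span F (Set.range M) = P} =
      Nat.card {U : Matrix (Fin (k 0)) (Fin (k 0)) F // BlockUTk F t k U ∧ IsUnit U} := by
  classical
  have hk1 : ∀ i < t, k (i + 1) ≤ k i := fun i hi => (hk i hi).1
  have hk0 := k_le_k0 t k hk1
  have hoff := off_eq t k hk1 hk0
  set V : ℕ → Submodule F (Fin (∑ m ∈ Finset.range t, n m) → F) :=
    fun i => P ⊓ lastSpan F (∑ m ∈ Finset.range t, n m) (∑ j ∈ Finset.range i, n j) with hV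
  have hV0 : V 0 = P := by
    simp only [hV, Finset.range_zero, Finset.sum_empty, lastSpan_zero, inf_top_eq]
  have hVt : V t = ⊥ := by
    simp only [hV]
    rw [lastSpan_self, inf_bot_eq]
  have hdim : ∀ i ≤ t, finrank F (V i) = k i := by
    intro i hit
    rcases Nat.eq_or_lt_of_le hit with rfl | hlt
    · rw [hVt, hkt, finrank_bot]
    · rcases Nat.eq_zero_or_pos i with rfl | hpos
      · rw [hV0]; exact hP.1
      · exact hP.2 i hpos hlt
  have hmono : ∀ i < t, V (i + 1) ≤ V i := fun i _ =>
    inf_le_inf_left _ (lastSpan_antitone _ (Ns_mono n i (i + 1) (by omega)))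
  obtain ⟨v, hli, hsp, hmemV⟩ := adapted_basis t k V hmono hdim hk1 hVt hkt
  rw [hV0] at hsp
  have hmemoff : ∀ i ≤ t, ∀ r : Fin (k 0),
      (∑ j ∈ Finset.range i, (k j - k (j + 1))) ≤ (r : ℕ) → v r ∈ V i := by
    intro i hit r hr
    exact hmemV i hit r (by rw [← hoff i hit]; exact hr)
  set M₀ : Matrix (Fin (k 0)) (Fin (∑ m ∈ Finset.range t, n m)) F := Matrix.of v with hM₀
  have hM₀span : Submodule.span F (Set.range M₀) = P := by
    rw [show Set.range M₀ = Set.range v from rfl]; exact hsp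
  have hM₀ech : EchelonBUT F t n k M₀ := by
    intro i hit r c hc hr
    have hmem := hmemoff i hit.le r hr
    exact (mem_lastSpan_iff (v r)).1 hmem.2 c hc
  have hvmemP : ∀ r, v r ∈ P := fun r => hsp ▸ Submodule.subset_span (Set.mem_range_self r)
  set vP : Fin (k 0) → ↥P := fun r => ⟨v r, hvmemP r⟩ with hvPdef
  have hliP : LinearIndependent F vP := LinearIndependent.of_comp P.subtype hli
  have hspP : ⊤ ≤ Submodule.span F (Set.range vP) := (span_top_of_map vP hsp).ge
  set bP : Basis (Fin (k 0)) F ↥P := Basis.mk hliP hspP with hbP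
  have hbP_apply : ∀ s, ((bP s : ↥P) : Fin (∑ m ∈ Finset.range t, n m) → F) = v s := fun s => by
    rw [hbP, Basis.mk_apply]
  have hrankP : finrank F ↥P = k 0 := hP.1
  -- span of the tail rows equals V i
  have htail_span : ∀ i < t,
      Submodule.span F (v '' {s : Fin (k 0) |
        (∑ j ∈ Finset.range i, (k j - k (j + 1))) ≤ (s : ℕ)}) = V i := by
    intro i hit
    set S := {s : Fin (k 0) | (∑ j ∈ Finset.range i, (k j - k (j + 1))) ≤ (s : ℕ)} with hS
    have hle : Submodule.span F (v '' S) ≤ V i := by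
      rw [Submodule.span_le]
      rintro x ⟨s, hs, rfl⟩
      exact hmemoff i hit.le s hs
    haveI : Fintype ↥S := Fintype.ofFinite ↥S
    have hcard : Fintype.card ↥S = k i := by
      rw [← Nat.card_eq_fintype_card]
      have hEq : Nat.card ↥S = Nat.card (Fin (k 0 - (∑ j ∈ Finset.range i, (k j - k (j + 1))))) :=
        Nat.card_congr (finTailEquiv (k 0) _)
      rw [hEq, Nat.card_eq_fintype_card, Fintype.card_fin, hoff i hit.le]
      have := hk0 i hit.le
      omega
    have hvS : Set.range (v ∘ (Subtype.val : ↥S → Fin (k 0))) = v '' S := by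
      rw [Set.range_comp, Subtype.range_coe]
    have hfr : finrank F ↥(Submodule.span F (v '' S)) = k i := by
      rw [← hvS, finrank_span_eq_card (hli.comp _ Subtype.val_injective), hcard]
    exact Submodule.eq_of_le_of_finrank_le hle (by rw [hdim i hit.le, hfr])
  -- forward map
  have hfwd_ech : ∀ U : Matrix (Fin (k 0)) (Fin (k 0)) F, BlockUTk F t k U →
      EchelonBUT F t n k (U * M₀) := by
    intro U hBU i hit r c hc hr
    rw [Matrix.mul_apply]
    apply Finset.sum_eq_zero
    intro s _
    by_cases hs : (s : ℕ) < ∑ j ∈ Finset.range i, (k j - k (j + 1))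
    · rw [hBU i hit r s hs hr, zero_mul]
    · rw [hM₀ech i hit s c hc (not_lt.1 hs), mul_zero]
  have hfwd_span : ∀ U : Matrix (Fin (k 0)) (Fin (k 0)) F, IsUnit U →
      Submodule.span F (Set.range (U * M₀)) = P := by
    intro U hU
    apply le_antisymm
    · exact le_trans (span_range_mul_le U M₀) hM₀span.le
    · rw [← hM₀span]
      have hUdet : IsUnit U.det := (Matrix.isUnit_iff_isUnit_det U).1 hU
      have hinv : U⁻¹ * U = 1 := Matrix.nonsing_inv_mul U hUdet
      have : M₀ = U⁻¹ * (U * M₀) := by rw [← Matrix.mul_assoc, hinv, Matrix.one_mul]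
      calc Submodule.span F (Set.range M₀)
          = Submodule.span F (Set.range (U⁻¹ * (U * M₀))) := by rw [← this]
        _ ≤ Submodule.span F (Set.range (U * M₀)) := span_range_mul_le _ _
  -- rows of M₀ linearly independent give injectivity
  have hinj : ∀ U₁ U₂ : Matrix (Fin (k 0)) (Fin (k 0)) F,
      U₁ * M₀ = U₂ * M₀ → U₁ = U₂ := by
    intro U₁ U₂ hEq
    ext r s
    have hrow : ∑ s', (U₁ r s' - U₂ r s') • v s' = 0 := by
      funext c
      rw [Finset.sum_apply]
      have h1 : ∑ j, U₁ r j * v j c = ∑ j, U₂ r j * v j c := by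
        have h0 := congrFun (congrFun hEq r) c
        rw [Matrix.mul_apply, Matrix.mul_apply] at h0
        exact h0
      simp only [Pi.smul_apply, smul_eq_mul, sub_mul, Pi.zero_apply]
      rw [Finset.sum_sub_distrib, h1, sub_self]
    have hz := Fintype.linearIndependent_iff.1 hli _ hrow s
    exact sub_eq_zero.1 hz
  -- surjectivity: every echelon representation is U * M₀
  have hsurj : ∀ M : Matrix (Fin (k 0)) (Fin (∑ m ∈ Finset.range t, n m)) F,
      EchelonBUT F t n k M → Submodule.span F (Set.range M) = P →
      ∃ U, BlockUTk F t k U ∧ IsUnit U ∧ U * M₀ = M := by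
    intro M hMech hMspan
    have hMP : ∀ r, M r ∈ P := fun r => hMspan ▸ Submodule.subset_span (Set.mem_range_self r)
    set U : Matrix (Fin (k 0)) (Fin (k 0)) F :=
      fun r s => (bP.repr ⟨M r, hMP r⟩) s with hU
    have hUM : U * M₀ = M := by
      ext r c
      have hx := bP.sum_repr ⟨M r, hMP r⟩
      have h2 : ((∑ s, (bP.repr ⟨M r, hMP r⟩) s • bP s : ↥P) :
          Fin (∑ m ∈ Finset.range t, n m) → F) = M r := congrArg Subtype.val hx
      rw [AddSubmonoidClass.coe_finset_sum] at h2
      have h2c := congrFun h2 c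
      rw [Finset.sum_apply] at h2c
      simp only [Submodule.coe_smul, Pi.smul_apply, smul_eq_mul] at h2c
      rw [Matrix.mul_apply, ← h2c]
      apply Finset.sum_congr rfl
      intro s _
      rw [hbP_apply s]
      rfl
    have hBU : BlockUTk F t k U := by
      intro i hit r s hs hr
      set Si := {s' : Fin (k 0) | (∑ j ∈ Finset.range i, (k j - k (j + 1))) ≤ (s' : ℕ)} with hSi
      have hMrV : M r ∈ V i := by
        refine ⟨hMP r, (mem_lastSpan_iff (M r)).2 ?_⟩
        intro c hc
        exact hMech i hit r c hc hr
      have hmap : Submodule.map P.subtype (Submodule.span F (bP '' Si)) = V i := by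
        rw [Submodule.map_span]
        have himg : P.subtype '' (bP '' Si) = v '' Si := by
          rw [← Set.image_comp]
          apply Set.image_congr
          intro s' _
          exact hbP_apply s'
        rw [himg]
        exact htail_span i hit
      have hxin : (⟨M r, hMP r⟩ : ↥P) ∈ Submodule.span F (bP '' Si) := by
        have hmm : M r ∈ Submodule.map P.subtype (Submodule.span F (bP '' Si)) :=
          hmap.symm ▸ hMrV
        obtain ⟨y, hy, hyx⟩ := hmm
        have hyy : y = ⟨M r, hMP r⟩ := Subtype.ext hyx
        exact hyy ▸ hy
      have hsupp := bP.mem_span_image.1 hxin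
      by_contra habs
      have hmem : s ∈ Si := hsupp (Finsupp.mem_support_iff.2 habs)
      rw [hSi] at hmem
      exact absurd hmem (not_le.2 hs)
    have hMrows_li : LinearIndependent F (fun r => M r) := by
      set MP : Fin (k 0) → ↥P := fun r => ⟨M r, hMP r⟩ with hMPdef
      have hsp' : ⊤ ≤ Submodule.span F (Set.range MP) := (span_top_of_map MP hMspan).ge
      have hcard : Fintype.card (Fin (k 0)) = finrank F ↥P := by
        rw [Fintype.card_fin, hrankP]
      have hliMP := linearIndependent_of_top_le_span_of_card_eq_finrank hsp' hcard
      exact hliMP.map' P.subtype (Submodule.ker_subtype P)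
    have hUrows : LinearIndependent F (fun r => U r) := by
      rw [Fintype.linearIndependent_iff]
      intro g hg r0
      have hgM : ∑ r, g r • M r = 0 := by
        funext c
        rw [Finset.sum_apply]
        have hMc : ∀ r, M r c = ∑ s, U r s * v s c := by
          intro r
          rw [← hUM, Matrix.mul_apply]
          rfl
        have h2 : ∀ s, (∑ r, g r * U r s) = 0 := by
          intro s
          have hgs := congrFun hg s
          rw [Finset.sum_apply] at hgs
          simpa [smul_eq_mul] using hgs
        have h1 : ∑ r, g r * M r c = ∑ s, (∑ r, g r * U r s) * v s c := by
          calc ∑ r, g r * M r c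
              = ∑ r, ∑ s, g r * (U r s * v s c) := by
                apply Finset.sum_congr rfl; intro r _; rw [hMc r, Finset.mul_sum]
            _ = ∑ s, ∑ r, g r * (U r s * v s c) := Finset.sum_comm
            _ = ∑ s, (∑ r, g r * U r s) * v s c := by
                apply Finset.sum_congr rfl; intro s _
                rw [Finset.sum_mul]
                apply Finset.sum_congr rfl; intro r _; ring
        simp only [Pi.smul_apply, smul_eq_mul, Pi.zero_apply]
        rw [h1]
        simp [h2]
      exact Fintype.linearIndependent_iff.1 hMrows_li g hgM r0
    exact ⟨U, hBU, Matrix.linearIndependent_rows_iff_isUnit.1 hUrows, hUM⟩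
  -- the equivalence
  let Φ : {U : Matrix (Fin (k 0)) (Fin (k 0)) F // BlockUTk F t k U ∧ IsUnit U} →
      {M : Matrix (Fin (k 0)) (Fin (∑ m ∈ Finset.range t, n m)) F //
        EchelonBUT F t n k M ∧ Submodule.span F (Set.range M) = P} :=
    fun U => ⟨U.1 * M₀, hfwd_ech U.1 U.2.1, hfwd_span U.1 U.2.2⟩
  have hbij : Function.Bijective Φ := by
    constructor
    · intro U₁ U₂ h
      exact Subtype.ext (hinj _ _ (congrArg Subtype.val h))
    · rintro ⟨M, hMech, hMspan⟩
      obtain ⟨U, hBU, hUu, hUM⟩ := hsurj M hMech hMspan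
      exact ⟨⟨U, hBU, hUu⟩, Subtype.ext hUM⟩
  exact (Nat.card_congr (Equiv.ofBijective Φ hbij)).symm
end part2

/-- If an invertible block upper-triangular `U` satisfies `U ⬝ Q = Q` for the canonical
representation `Q`, then `U = 1`; consequently every subspace of type `(k 0, …, k (t-1))`
has exactly `|GL_{k 0 - k 1, …, k (t-1)}(F_q)|` echelon block upper-triangular matrix
representations. -/
theorem stmt13 {F : Type} [Field F] [Fintype F] (t : ℕ) (ht : 1 ≤ t) (n k : ℕ → ℕ)
    (hk : ∀ i < t, k (i + 1) ≤ k i ∧ k i - k (i + 1) ≤ n i) (hkt : k t = 0) :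
    (∀ U : Matrix (Fin (k 0)) (Fin (k 0)) F, IsUnit U → BlockUTk F t k U →
      U * Qcan F t n k = Qcan F t n k → U = 1) ∧
    (∀ P : Submodule F (Fin (∑ m ∈ Finset.range t, n m) → F), IsTypeP F t n k P →
      Nat.card {M : Matrix (Fin (k 0)) (Fin (∑ m ∈ Finset.range t, n m)) F //
          EchelonBUT F t n k M ∧ Submodule.span F (Set.range M) = P} =
        Nat.card {U : Matrix (Fin (k 0)) (Fin (k 0)) F // BlockUTk F t k U ∧ IsUnit U}) := by
  constructor
  · intro U _ _ hUQ
    exact part1_main hk hkt U hUQ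
  · intro P hP
    exact part2_main ht hk hkt P hP
end

section
/- Given an (m₁+m₂)×(n₁+n₂) block upper-triangular matrix [[A₁₂, C₁₂],[0, B₁₂]] over F_q with rank A₁₂ = a, rank B₁₂ = b, rank (A₁₂ C₁₂) = a + c, and rank of (C₁₂ over B₁₂) = b + c, there exist invertible block-diagonal matrices T = diag(T₁₁, T₂₂) and S = diag(S₁₁, S₂₂) (blocks of sizes m₁, m₂ and n₁, n₂ respectively) such that T · [[A₁₂, C₁₂],[0, B₁₂]] · S has A₁₂-block equal to [[I^{(a)}, 0],[0,0]] and B₁₂-block equal to [[I^{(b)}, 0],[0,0]], and the transformed C-block, partitioned compatibly as [[C₁,C₂],[C₃,C₄]], satisfies rank (C₃ C₄) = rank (C₂ over C₄) = c. -/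
/-- The `m × n` partial identity matrix `[[I^{(a)}, 0], [0, 0]]`. -/
def pIdent (F : Type) [Field F] (m n a : ℕ) : Matrix (Fin m) (Fin n) F :=
  fun r c => if (r : ℕ) = (c : ℕ) ∧ (r : ℕ) < a then 1 else 0

/-!
Over a field every matrix of rank `r` is equivalent to `[[I_r, 0], [0, 0]]`, so `A₁₂` and `B₁₂`
can be normalised independently by `(T₁₁, S₁₁)` and `(T₂₂, S₂₂)`. These block-diagonal
transformations preserve the ranks of `(A₁₂ C₁₂)` and of `(C₁₂ over B₁₂)`. Once `A₁₂` is
`[[I_a, 0], [0, 0]]`, the column space of `(A₁₂ C)` is `span(e₁, …, e_a)` plus the column space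
of `C`, and killing the first `a` coordinates shows that its dimension is `a + rank (C₃ C₄)`;
dually for the rows of `(C over B₁₂)`.
-/

open Matrix Module

theorem Module.Basis.sumExtend_apply_inl {K V ι : Type*} [Field K] [AddCommGroup V] [Module K V]
    {v : ι → V} (hv : LinearIndependent K v) (i : ι) : Basis.sumExtend hv (.inl i) = v i := by
  simp only [Basis.sumExtend, Equiv.trans_def, Basis.coe_reindex, Basis.coe_extend,
    Function.comp_apply]
  rfl

theorem Module.Basis.isUnit_toMatrix {R M ι : Type*} [CommRing R] [AddCommGroup M] [Module R M]
    [Fintype ι] [DecidableEq ι] (b b' : Basis ι R M) : IsUnit (b.toMatrix b') :=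
  letI := b.invertibleToMatrix b'
  isUnit_of_invertible _

section NormalForm

variable {K : Type*} [Field K]

theorem LinearMap.exists_basis_toMatrix_eq_fromBlocks {V W κ ν : Type*}
    [AddCommGroup V] [Module K V] [FiniteDimensional K V]
    [AddCommGroup W] [Module K W] [FiniteDimensional K W]
    [Fintype κ] [Fintype ν] [DecidableEq κ] [DecidableEq ν] (f : V →ₗ[K] W)
    (hν : Fintype.card ν = finrank K (ker f))
    (hκ : finrank K (range f) + Fintype.card κ = finrank K W) :
    ∃ (b : Basis (Fin (finrank K (range f)) ⊕ ν) K V)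
      (c : Basis (Fin (finrank K (range f)) ⊕ κ) K W), toMatrix b c f = fromBlocks 1 0 0 0 := by
  obtain ⟨U, hU⟩ := Submodule.exists_isCompl (ker f)
  have hUr : finrank K U = finrank K (range f) := by
    have := Submodule.finrank_add_eq_of_isCompl hU
    have := finrank_range_add_finrank_ker f
    omega
  let bU := finBasisOfFinrankEq K U hUr
  let bK := (finBasisOfFinrankEq K (ker f) hν.symm).reindex (Fintype.equivFin ν).symm
  let b := (bU.prod bK).map (Submodule.prodEquivOfIsCompl U (ker f) hU.symm)
  have hinj : ker (f ∘ₗ U.subtype) = ⊥ := by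
    rw [ker_comp, ← Submodule.disjoint_iff_comap_eq_bot]
    exact hU.symm.disjoint
  have hli : LinearIndependent K (f ∘ U.subtype ∘ bU) := bU.linearIndependent.map' _ hinj
  let c₀ := Basis.sumExtend hli
  have := Module.Finite.finite_basis c₀
  have : Finite (Basis.sumExtendIndex hli) :=
    .of_injective _ (Sum.inr_injective (α := Fin (finrank K (range f))))
  have hcard : Nat.card (Basis.sumExtendIndex hli) = Nat.card κ := by
    have := finrank_eq_nat_card_basis c₀
    rw [Nat.card_sum, Nat.card_eq_fintype_card (α := Fin _), Fintype.card_fin] at this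
    rw [Nat.card_eq_fintype_card (α := κ)]
    omega
  let c := c₀.reindex (Equiv.sumCongr (Equiv.refl _) (Finite.card_eq.mp hcard).some)
  have hc : ∀ j, f (b (.inl j)) = c (.inl j) := fun j => by
    have : c (.inl j) = c₀ (.inl j) := by simp only [c, Basis.reindex_apply]; rfl
    rw [this, Basis.sumExtend_apply_inl]
    simp [b]
  have hk : ∀ j, f (b (.inr j)) = 0 := fun j => by simp [b]
  refine ⟨b, c, ?_⟩
  ext i (j | j)
  · rw [toMatrix_apply, hc, c.repr_self]
    rcases i with i | i <;> simp [Finsupp.single_apply, one_apply, eq_comm]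
  · rw [toMatrix_apply, hk]
    rcases i with i | i <;> simp

theorem Matrix.exists_isUnit_mul_mul_eq_submatrix_fromBlocks {m n κ ν : Type*}
    [Fintype m] [Fintype n] [DecidableEq m] [DecidableEq n]
    [Fintype κ] [Fintype ν] [DecidableEq κ] [DecidableEq ν]
    (M : Matrix m n K) (em : m ≃ Fin M.rank ⊕ κ) (en : n ≃ Fin M.rank ⊕ ν) :
    ∃ (T : Matrix m m K) (S : Matrix n n K), IsUnit T ∧ IsUnit S ∧
      T * M * S = (fromBlocks 1 0 0 0).submatrix em en := by
  have hn : M.rank + Fintype.card ν = Fintype.card n := by simp [Fintype.card_congr en]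
  have hm : M.rank + Fintype.card κ = Fintype.card m := by simp [Fintype.card_congr em]
  have hrn := M.mulVecLin.finrank_range_add_finrank_ker
  rw [finrank_fintype_fun_eq_card] at hrn
  unfold rank at hn hm
  obtain ⟨b, c, hbc⟩ : ∃ (b : Basis (Fin M.rank ⊕ ν) K (n → K))
      (c : Basis (Fin M.rank ⊕ κ) K (m → K)),
      LinearMap.toMatrix b c M.mulVecLin = fromBlocks 1 0 0 0 :=
    M.mulVecLin.exists_basis_toMatrix_eq_fromBlocks (by omega)
      (by rwa [finrank_fintype_fun_eq_card])
  let b' := b.reindex en.symm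
  let c' := c.reindex em.symm
  have hM : LinearMap.toMatrix (Pi.basisFun K n) (Pi.basisFun K m) M.mulVecLin = M := by
    ext i j; simp [LinearMap.toMatrix_apply]
  refine ⟨c'.toMatrix (Pi.basisFun K m), (Pi.basisFun K n).toMatrix b',
    c'.isUnit_toMatrix _, Basis.isUnit_toMatrix _ _, ?_⟩
  conv_lhs => rw [← hM, basis_toMatrix_mul_linearMap_toMatrix_mul_basis_toMatrix]
  ext i j
  rw [LinearMap.toMatrix_apply, submatrix_apply, ← hbc]
  simp [LinearMap.toMatrix_apply, b', c']

end NormalForm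

namespace Matrix

theorem range_mulVecLin_fromCols {R m n₁ n₂ : Type*} [CommSemiring R] [Fintype n₁] [Fintype n₂]
    (A : Matrix m n₁ R) (C : Matrix m n₂ R) :
    LinearMap.range (fromCols A C).mulVecLin =
      LinearMap.range A.mulVecLin ⊔ LinearMap.range C.mulVecLin := by
  have : (fromCols A C).mulVecLin = A.mulVecLin.coprod C.mulVecLin ∘ₗ
      (LinearEquiv.sumArrowLequivProdArrow n₁ n₂ R R).toLinearMap := by
    ext v : 1
    simp only [LinearMap.comp_apply, LinearMap.coprod_apply, mulVecLin_apply, fromCols_mulVec]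
    rfl
  rw [this, LinearMap.range_comp_of_range_eq_top _ (LinearEquiv.range _), LinearMap.range_coprod]

theorem rank_fromCols_comm {R m n₁ n₂ : Type*} [CommSemiring R] [Fintype n₁] [Fintype n₂]
    (A : Matrix m n₁ R) (B : Matrix m n₂ R) : (fromCols A B).rank = (fromCols B A).rank := by
  rw [← rank_submatrix (fromCols A B) (Equiv.refl m) (Equiv.sumComm n₂ n₁)]
  congr 1
  ext i (j | j) <;> rfl

theorem rank_fromBlocks_one_zero_zero_zero {R ι κ ν : Type*} [CommSemiring R]
    [StrongRankCondition R] [Fintype ι] [Fintype κ] [Fintype ν] [DecidableEq ι] :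
    (fromBlocks (1 : Matrix ι ι R) 0 0 (0 : Matrix κ ν R)).rank = Fintype.card ι := by
  have hfac : fromBlocks (1 : Matrix ι ι R) 0 0 (0 : Matrix κ ν R) =
      fromRows (1 : Matrix ι ι R) (0 : Matrix κ ι R) * fromCols (1 : Matrix ι ι R) 0 := by
    rw [fromRows_mul, Matrix.one_mul, Matrix.zero_mul, ← fromCols_zero,
      fromRows_fromCols_eq_fromBlocks]
  apply le_antisymm
  · rw [hfac]
    exact (rank_mul_le_left _ _).trans (rank_le_card_width _)
  · calc Fintype.card ι = (1 : Matrix ι ι R).rank := rank_one.symm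
      _ = (fromCols (1 : Matrix ι ι R) (0 : Matrix ι κ R) *
            fromBlocks (1 : Matrix ι ι R) 0 0 (0 : Matrix κ ν R) *
            fromRows (1 : Matrix ι ι R) (0 : Matrix ν ι R)).rank := by
        simp [fromCols_mul_fromBlocks, fromCols_mul_fromRows]
      _ ≤ _ := (rank_mul_le_left _ _).trans (rank_mul_le_right _ _)

section Field

variable {K : Type*} [Field K]

theorem rank_fromCols_eq_of_ker_eq_range {k m n₁ n₂ : Type*} [Fintype m] [Fintype n₁] [Fintype n₂]
    (A : Matrix m n₁ K) (C : Matrix m n₂ K) (R : Matrix k m K)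
    (hR : LinearMap.ker R.mulVecLin = LinearMap.range A.mulVecLin) :
    (fromCols A C).rank = A.rank + (R * C).rank := by
  -- rank–nullity for `R` on the column space `V` of `(A C)`, where `V ⊓ ker R = ker R = col A`
  set V := LinearMap.range (fromCols A C).mulVecLin
  have hV : V = LinearMap.range A.mulVecLin ⊔ LinearMap.range C.mulVecLin :=
    range_mulVecLin_fromCols A C
  have hker : LinearMap.ker R.mulVecLin ≤ V := hV ▸ hR ▸ le_sup_left
  have hmap : V.map R.mulVecLin = LinearMap.range (R * C).mulVecLin := by
    rw [hV, Submodule.map_sup, LinearMap.le_ker_iff_map.mp hR.ge, bot_sup_eq,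
      ← LinearMap.range_comp, mulVecLin_mul]
  have := LinearMap.finrank_range_add_finrank_ker (R.mulVecLin.domRestrict V)
  rw [LinearMap.range_domRestrict, hmap, LinearMap.ker_domRestrict,
    (Submodule.comapSubtypeEquivOfLe hker).finrank_eq, hR] at this
  rw [rank, rank, rank, ← this, add_comm]

theorem rank_fromCols_fromBlocks_one_zero_zero_zero {ι κ ν μ : Type*} [Fintype ι] [Fintype κ]
    [Fintype ν] [Fintype μ] [DecidableEq ι] [DecidableEq κ] (X : Matrix (ι ⊕ κ) μ K) :
    (fromCols (fromBlocks (1 : Matrix ι ι K) 0 0 (0 : Matrix κ ν K)) X).rank =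
      Fintype.card ι + X.toRows₂.rank := by
  rw [rank_fromCols_eq_of_ker_eq_range _ _ (fromCols (0 : Matrix κ ι K) 1),
    rank_fromBlocks_one_zero_zero_zero]
  · conv_lhs => rw [← fromRows_toRows X, fromCols_mul_fromRows]
    simp
  · ext x
    simp only [LinearMap.mem_ker, LinearMap.mem_range, mulVecLin_apply, fromCols_mulVec,
      fromBlocks_mulVec, zero_mulVec, one_mulVec, zero_add, add_zero]
    constructor
    · intro hx
      refine ⟨Sum.elim (x ∘ Sum.inl) 0, ?_⟩
      ext (i | i)
      · simp
      · simpa using (congrFun hx i).symm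
    · rintro ⟨y, rfl⟩
      simp

end Field

section Units

variable {R : Type*} [CommRing R]

theorem rank_mul_mul_of_isUnit {m n : Type*} [Fintype m] [Fintype n] [DecidableEq m]
    [DecidableEq n] {T : Matrix m m R} {S : Matrix n n R} (hT : IsUnit T) (hS : IsUnit S)
    (M : Matrix m n R) : (T * M * S).rank = M.rank := by
  rw [rank_mul_eq_left_of_isUnit_det _ _ ((isUnit_iff_isUnit_det S).mp hS),
    rank_mul_eq_right_of_isUnit_det _ _ ((isUnit_iff_isUnit_det T).mp hT)]

theorem rank_fromCols_mul_mul {m n₁ n₂ : Type*} [Fintype m] [Fintype n₁] [Fintype n₂]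
    [DecidableEq m] [DecidableEq n₁] [DecidableEq n₂]
    {T : Matrix m m R} {S₁ : Matrix n₁ n₁ R} {S₂ : Matrix n₂ n₂ R} (hT : IsUnit T)
    (hS₁ : IsUnit S₁) (hS₂ : IsUnit S₂) (A : Matrix m n₁ R) (C : Matrix m n₂ R) :
    (fromCols (T * A * S₁) (T * C * S₂)).rank = (fromCols A C).rank := by
  have : fromCols (T * A * S₁) (T * C * S₂) = T * fromCols A C * fromBlocks S₁ 0 0 S₂ := by
    simp [mul_fromCols, fromCols_mul_fromBlocks]
  rw [this, rank_mul_mul_of_isUnit hT (isUnit_fromBlocks_zero₂₁.mpr ⟨hS₁, hS₂⟩)]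

theorem rank_fromRows_mul_mul {m₁ m₂ n : Type*} [Fintype m₁] [Fintype m₂] [Fintype n]
    [DecidableEq m₁] [DecidableEq m₂] [DecidableEq n]
    {T₁ : Matrix m₁ m₁ R} {T₂ : Matrix m₂ m₂ R} {S : Matrix n n R} (hT₁ : IsUnit T₁)
    (hT₂ : IsUnit T₂) (hS : IsUnit S) (C : Matrix m₁ n R) (B : Matrix m₂ n R) :
    (fromRows (T₁ * C * S) (T₂ * B * S)).rank = (fromRows C B).rank := by
  have : fromRows (T₁ * C * S) (T₂ * B * S) = fromBlocks T₁ 0 0 T₂ * fromRows C B * S := by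
    simp [fromRows_mul, fromBlocks_mul_fromRows]
  rw [this, rank_mul_mul_of_isUnit (isUnit_fromBlocks_zero₂₁.mpr ⟨hT₁, hT₂⟩) hS]

end Units

end Matrix

def finTail (a m : ℕ) (r : Fin (m - a)) : Fin m := ⟨a + r, by omega⟩

def finSplit {a m : ℕ} (h : a ≤ m) : Fin m ≃ Fin a ⊕ Fin (m - a) :=
  (finCongr (Nat.add_sub_cancel' h).symm).trans finSumFinEquiv.symm

theorem finSplit_symm_comp_inr {a m : ℕ} (h : a ≤ m) :
    (finSplit h).symm ∘ Sum.inr = finTail a m := by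
  ext r; simp [finSplit, finTail]

section PartialIdentity

variable {K : Type} [Field K]

theorem pIdent_eq_submatrix_fromBlocks {m n a : ℕ} (ham : a ≤ m) (han : a ≤ n) :
    pIdent K m n a = (fromBlocks 1 0 0 0).submatrix (finSplit ham) (finSplit han) := by
  ext i j
  obtain ⟨i, rfl⟩ := (finSplit ham).symm.surjective i
  obtain ⟨j, rfl⟩ := (finSplit han).symm.surjective j
  rcases i with i | i <;> rcases j with j | j <;> simp [pIdent, finSplit, one_apply, Fin.ext_iff]
  omega

theorem pIdent_transpose (m n a : ℕ) : (pIdent K m n a)ᵀ = pIdent K n m a := by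
  ext i j
  simp only [transpose_apply, pIdent]
  grind

theorem exists_isUnit_mul_mul_eq_pIdent {m n : ℕ} (M : Matrix (Fin m) (Fin n) K) :
    ∃ (T : Matrix (Fin m) (Fin m) K) (S : Matrix (Fin n) (Fin n) K),
      IsUnit T ∧ IsUnit S ∧ T * M * S = pIdent K m n M.rank := by
  rw [pIdent_eq_submatrix_fromBlocks (rank_le_height M) (rank_le_width M)]
  exact exists_isUnit_mul_mul_eq_submatrix_fromBlocks M _ _

theorem rank_fromCols_pIdent {m n a : ℕ} {ι : Type*} [Fintype ι] (ham : a ≤ m) (han : a ≤ n)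
    (C : Matrix (Fin m) ι K) :
    (fromCols (pIdent K m n a) C).rank = a + (C.submatrix (finTail a m) id).rank := by
  have : fromCols (pIdent K m n a) C =
      (fromCols (fromBlocks 1 0 0 0) (C.submatrix (finSplit ham).symm id)).submatrix
        (finSplit ham) ((finSplit han).sumCongr (Equiv.refl ι)) := by
    rw [pIdent_eq_submatrix_fromBlocks ham han]
    ext i (j | j) <;> simp
  rw [this, rank_submatrix, rank_fromCols_fromBlocks_one_zero_zero_zero, Fintype.card_fin,
    ← finSplit_symm_comp_inr ham]
  rfl

theorem rank_fromRows_pIdent {m n b : ℕ} {ι : Type*} [Fintype ι] (hbm : b ≤ m) (hbn : b ≤ n)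
    (C : Matrix ι (Fin n) K) :
    (fromRows C (pIdent K m n b)).rank = b + (C.submatrix id (finTail b n)).rank := by
  rw [← rank_transpose, transpose_fromRows, pIdent_transpose, rank_fromCols_comm,
    rank_fromCols_pIdent hbn hbm, ← transpose_submatrix, rank_transpose]

end PartialIdentity

/-- Normal form under block-diagonal equivalence of a block upper-triangular matrix
`[[A₁₂, C₁₂], [0, B₁₂]]` with the stated rank conditions: the diagonal blocks can be put
into the form `[[I, 0], [0, 0]]` while the transformed `C`-block `[[C₁,C₂],[C₃,C₄]]`
satisfies `rank (C₃ C₄) = rank (C₂ over C₄) = c`. -/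
theorem stmt18 {F : Type} [Field F] (m₁ m₂ n₁ n₂ a b c : ℕ)
    (ham : a ≤ m₁) (han : a ≤ n₁) (hbm : b ≤ m₂) (hbn : b ≤ n₂)
    (A₁₂ : Matrix (Fin m₁) (Fin n₁) F) (C₁₂ : Matrix (Fin m₁) (Fin n₂) F)
    (B₁₂ : Matrix (Fin m₂) (Fin n₂) F)
    (hA : A₁₂.rank = a) (hB : B₁₂.rank = b)
    (hAC : (Matrix.fromCols A₁₂ C₁₂).rank = a + c)
    (hCB : (Matrix.fromRows C₁₂ B₁₂).rank = b + c) :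
    ∃ (T₁₁ : Matrix (Fin m₁) (Fin m₁) F) (T₂₂ : Matrix (Fin m₂) (Fin m₂) F)
      (S₁₁ : Matrix (Fin n₁) (Fin n₁) F) (S₂₂ : Matrix (Fin n₂) (Fin n₂) F),
      IsUnit T₁₁ ∧ IsUnit T₂₂ ∧ IsUnit S₁₁ ∧ IsUnit S₂₂ ∧
      T₁₁ * A₁₂ * S₁₁ = pIdent F m₁ n₁ a ∧
      T₂₂ * B₁₂ * S₂₂ = pIdent F m₂ n₂ b ∧
      ((T₁₁ * C₁₂ * S₂₂).submatrix
          (fun r : Fin (m₁ - a) => (⟨a + r.1, by omega⟩ : Fin m₁)) id).rank = c ∧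
      ((T₁₁ * C₁₂ * S₂₂).submatrix id
          (fun j : Fin (n₂ - b) => (⟨b + j.1, by omega⟩ : Fin n₂))).rank = c := by
  obtain ⟨T₁₁, S₁₁, hT₁₁, hS₁₁, hA'⟩ := exists_isUnit_mul_mul_eq_pIdent A₁₂
  obtain ⟨T₂₂, S₂₂, hT₂₂, hS₂₂, hB'⟩ := exists_isUnit_mul_mul_eq_pIdent B₁₂
  rw [hA] at hA'
  rw [hB] at hB'
  refine ⟨T₁₁, T₂₂, S₁₁, S₂₂, hT₁₁, hT₂₂, hS₁₁, hS₂₂, hA', hB', ?_, ?_⟩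
  · have h := rank_fromCols_mul_mul hT₁₁ hS₁₁ hS₂₂ A₁₂ C₁₂
    rw [hA', hAC, rank_fromCols_pIdent ham han] at h
    exact Nat.add_left_cancel h
  · have h := rank_fromRows_mul_mul hT₁₁ hT₂₂ hS₂₂ C₁₂ B₁₂
    rw [hB', hCB, rank_fromRows_pIdent hbm hbn] at h
    exact Nat.add_left_cancel h
end
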